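/- arXiv:2112.07908 — 3 statements merged into one kernel-verified Lean document; each statement's English description precedes it below -/
import Mathlib

section
/- For any vectors λ = (λ₁,…,λ_{2n}) and a = (a₁,…,a_{2n}) in ℝ^{2n} with |a| = 1, one has |∑ᵢ λᵢ²aᵢ² − (∑ᵢ λᵢ)(∑ⱼ λⱼaⱼ²) − ½[∑ᵢ λᵢ² − (∑ᵢ λᵢ)²]| ≤ (n−1)[∑ᵢ λᵢ² − ∑ᵢ λᵢ²aᵢ²]. -/
open Finset

/-- Fundamental vector inequality (Lemma 4.2 of the paper): for any vectors
`l, a : Fin (2n) → ℝ` with `a` a unit vector. -/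
theorem stmt0 (n : ℕ) (hn : 1 ≤ n) (l a : Fin (2*n) → ℝ)
    (ha : ∑ i, a i ^ 2 = 1) :
    |(∑ i, l i ^ 2 * a i ^ 2) - (∑ i, l i) * (∑ j, l j * a j ^ 2)
      - (1/2) * ((∑ i, l i ^ 2) - (∑ i, l i) ^ 2)|
      ≤ ((n : ℝ) - 1) * ((∑ i, l i ^ 2) - ∑ i, l i ^ 2 * a i ^ 2) := by
  have hwnn : ∀ i j : Fin (2*n), i ≠ j → 0 ≤ 1 - a i ^ 2 - a j ^ 2 := by
    intro i j hij
    have h1 := Finset.sum_le_sum_of_subset_of_nonneg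
      (Finset.subset_univ ({i, j} : Finset (Fin (2*n)))) (fun k _ _ => sq_nonneg (a k))
    rw [Finset.sum_pair hij, ha] at h1; linarith
  -- inner full sum
  have h2 : ∀ i : Fin (2*n), ∑ j, l i * l j * (1 - a i ^ 2 - a j ^ 2)
      = l i * (1 - a i ^ 2) * (∑ j, l j) - l i * (∑ j, l j * a j ^ 2) := by
    intro i
    rw [Finset.mul_sum, Finset.mul_sum, ← Finset.sum_sub_distrib]
    exact Finset.sum_congr rfl (fun j _ => by ring)
  have key : (∑ i, l i ^ 2 * a i ^ 2) - (∑ i, l i) * (∑ j, l j * a j ^ 2)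
      - (1/2) * ((∑ i, l i ^ 2) - (∑ i, l i) ^ 2)
      = (1/2) * ∑ i, ∑ j ∈ Finset.univ.erase i, l i * l j * (1 - a i ^ 2 - a j ^ 2) := by
    have h1 : ∀ i : Fin (2*n), ∑ j ∈ Finset.univ.erase i, l i * l j * (1 - a i ^ 2 - a j ^ 2)
        = (∑ j, l i * l j * (1 - a i ^ 2 - a j ^ 2)) - l i * l i * (1 - a i ^ 2 - a i ^ 2) :=
      fun i => Finset.sum_erase_eq_sub (Finset.mem_univ i)
    simp_rw [h1, h2]
    rw [Finset.sum_sub_distrib, Finset.sum_sub_distrib, ← Finset.sum_mul]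
    have e1 : ∑ i, l i * (1 - a i ^ 2) = (∑ i, l i) - ∑ i, l i * a i ^ 2 := by
      rw [← Finset.sum_sub_distrib]; exact Finset.sum_congr rfl (fun i _ => by ring)
    have e2 : ∑ i, l i * (∑ j, l j * a j ^ 2) = (∑ i, l i) * (∑ j, l j * a j ^ 2) :=
      (Finset.sum_mul _ _ _).symm
    have e3 : ∑ i, l i * l i * (1 - a i ^ 2 - a i ^ 2)
        = (∑ i, l i ^ 2) - 2 * ∑ i, l i ^ 2 * a i ^ 2 := by
      rw [Finset.mul_sum, ← Finset.sum_sub_distrib]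
      exact Finset.sum_congr rfl (fun i _ => by ring)
    rw [e1, e2, e3]
    ring
  rw [key]
  -- bound each term
  have step1 : |(1/2 : ℝ) * ∑ i, ∑ j ∈ Finset.univ.erase i, l i * l j * (1 - a i ^ 2 - a j ^ 2)|
      ≤ (1/2) * ∑ i, ∑ j ∈ Finset.univ.erase i,
          ((l i ^ 2 + l j ^ 2)/2) * (1 - a i ^ 2 - a j ^ 2) := by
    rw [abs_mul, abs_of_nonneg (by norm_num : (0:ℝ) ≤ 1/2)]
    apply mul_le_mul_of_nonneg_left _ (by norm_num)
    calc |∑ i, ∑ j ∈ Finset.univ.erase i, l i * l j * (1 - a i ^ 2 - a j ^ 2)|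
        ≤ ∑ i, |∑ j ∈ Finset.univ.erase i, l i * l j * (1 - a i ^ 2 - a j ^ 2)| :=
          Finset.abs_sum_le_sum_abs _ _
      _ ≤ ∑ i, ∑ j ∈ Finset.univ.erase i, |l i * l j * (1 - a i ^ 2 - a j ^ 2)| :=
          Finset.sum_le_sum (fun i _ => Finset.abs_sum_le_sum_abs _ _)
      _ ≤ ∑ i, ∑ j ∈ Finset.univ.erase i,
            ((l i ^ 2 + l j ^ 2)/2) * (1 - a i ^ 2 - a j ^ 2) := by
          apply Finset.sum_le_sum; intro i _
          apply Finset.sum_le_sum; intro j hj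
          have hij : i ≠ j := (Finset.ne_of_mem_erase hj).symm
          have hw := hwnn i j hij
          rw [abs_mul, abs_of_nonneg hw]
          apply mul_le_mul_of_nonneg_right _ hw
          rcases abs_cases (l i * l j) with ⟨h, _⟩ | ⟨h, _⟩ <;>
            nlinarith [sq_nonneg (l i - l j), sq_nonneg (l i + l j)]
  -- symmetrize
  have sym : ∑ i, ∑ j ∈ Finset.univ.erase i, l j ^ 2 * (1 - a i ^ 2 - a j ^ 2)
      = ∑ i, ∑ j ∈ Finset.univ.erase i, l i ^ 2 * (1 - a i ^ 2 - a j ^ 2) := by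
    rw [Finset.sum_comm' (fun i j => by
      simp [Finset.mem_erase, eq_comm] : ∀ i j : Fin (2*n),
        i ∈ (Finset.univ : Finset (Fin (2*n))) ∧ j ∈ Finset.univ.erase i ↔
        i ∈ Finset.univ.erase j ∧ j ∈ (Finset.univ : Finset (Fin (2*n))))]
    exact Finset.sum_congr rfl (fun i _ => Finset.sum_congr rfl (fun j _ => by ring))
  have split : ∑ i, ∑ j ∈ Finset.univ.erase i,
      ((l i ^ 2 + l j ^ 2)/2) * (1 - a i ^ 2 - a j ^ 2)
      = ∑ i, ∑ j ∈ Finset.univ.erase i, l i ^ 2 * (1 - a i ^ 2 - a j ^ 2) := by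
    have h3 : ∑ i, ∑ j ∈ Finset.univ.erase i,
        ((l i ^ 2 + l j ^ 2)/2) * (1 - a i ^ 2 - a j ^ 2)
        = (1/2) * (∑ i, ∑ j ∈ Finset.univ.erase i, l i ^ 2 * (1 - a i ^ 2 - a j ^ 2))
          + (1/2) * (∑ i, ∑ j ∈ Finset.univ.erase i, l j ^ 2 * (1 - a i ^ 2 - a j ^ 2)) := by
      rw [Finset.mul_sum, Finset.mul_sum, ← Finset.sum_add_distrib]
      refine Finset.sum_congr rfl fun i _ => ?_
      rw [Finset.mul_sum, Finset.mul_sum, ← Finset.sum_add_distrib]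
      exact Finset.sum_congr rfl fun j _ => by ring
    rw [h3, sym]; ring
  -- compute the symmetric sum
  have card_erase : ∀ i : Fin (2*n), ((Finset.univ.erase i).card : ℝ) = 2 * n - 1 := by
    intro i
    rw [Finset.card_erase_of_mem (Finset.mem_univ i), Finset.card_univ, Fintype.card_fin]
    have h2n : 1 ≤ 2 * n := le_trans hn (by omega)
    push_cast [Nat.cast_sub h2n]
    ring
  have inner : ∀ i : Fin (2*n), ∑ j ∈ Finset.univ.erase i, l i ^ 2 * (1 - a i ^ 2 - a j ^ 2)
      = (2 * (n:ℝ) - 2) * (l i ^ 2 * (1 - a i ^ 2)) := by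
    intro i
    rw [← Finset.mul_sum]
    have hs : ∑ j ∈ Finset.univ.erase i, (1 - a i ^ 2 - a j ^ 2)
        = ((Finset.univ.erase i).card : ℝ) * (1 - a i ^ 2) - ∑ j ∈ Finset.univ.erase i, a j ^ 2 := by
      rw [Finset.sum_sub_distrib, Finset.sum_const, nsmul_eq_mul]
    have hsa : ∑ j ∈ Finset.univ.erase i, a j ^ 2 = 1 - a i ^ 2 := by
      rw [Finset.sum_erase_eq_sub (Finset.mem_univ i), ha]
    rw [hs, hsa, card_erase i]
    ring
  have final : ∑ i, ∑ j ∈ Finset.univ.erase i, l i ^ 2 * (1 - a i ^ 2 - a j ^ 2)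
      = (2 * (n:ℝ) - 2) * ((∑ i, l i ^ 2) - ∑ i, l i ^ 2 * a i ^ 2) := by
    simp_rw [inner]
    rw [← Finset.mul_sum, ← Finset.sum_sub_distrib]
    congr 1
    exact Finset.sum_congr rfl (fun i _ => by ring)
  calc |(1/2 : ℝ) * ∑ i, ∑ j ∈ Finset.univ.erase i, l i * l j * (1 - a i ^ 2 - a j ^ 2)|
      ≤ (1/2) * ∑ i, ∑ j ∈ Finset.univ.erase i,
          ((l i ^ 2 + l j ^ 2)/2) * (1 - a i ^ 2 - a j ^ 2) := step1
    _ = ((n:ℝ) - 1) * ((∑ i, l i ^ 2) - ∑ i, l i ^ 2 * a i ^ 2) := by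
        rw [split, final]; ring
end

section
/- Let A be a symmetric (2n)×(2n) real matrix and v ∈ ℝ^{2n} with |v| = 1. Then ||Av|² − tr(A)·(vᵀAv) − ½(‖A‖² − tr(A)²)| ≤ (n−1)(‖A‖² − |Av|²), where ‖A‖² denotes the sum of squares of the entries of A (Frobenius norm squared). -/
/-!
Diagonalize `A = U diag(λ) Uᵀ` with `U` orthogonal and put `y = Uᵀ v`, `wᵢ = yᵢ²`. Then
`|Av|² = ∑ λᵢ² wᵢ`, `vᵀAv = ∑ λᵢ wᵢ`, `tr A = ∑ λᵢ` and `‖A‖² = ∑ λᵢ²`, so the claim is an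
inequality for a probability vector `w`. With the weights `cᵢⱼ = 1 - wᵢ - wⱼ` off the diagonal,
which are nonnegative and symmetric, twice the quantity inside the absolute value is the quadratic
form `∑ cᵢⱼ λᵢ λⱼ`, and `2 |λᵢ λⱼ| ≤ λᵢ² + λⱼ²` bounds it by `∑ᵢ λᵢ² ∑ⱼ cᵢⱼ = (2n - 2) ∑ λᵢ² (1 - wᵢ)`.
-/

open Finset Matrix

section QuadraticForm

variable {ι : Type*} [Fintype ι]

theorem abs_sum_mul_mul_le_sum_sq_mul_sum {c : ι → ι → ℝ} (hc : ∀ i j, 0 ≤ c i j)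
    (hsymm : ∀ i j, c i j = c j i) (x : ι → ℝ) :
    |∑ i, ∑ j, c i j * x i * x j| ≤ ∑ i, x i ^ 2 * ∑ j, c i j := by
  have hpair : ∀ i j, |c i j * x i * x j| ≤ (c i j * x i ^ 2 + c j i * x j ^ 2) / 2 := by
    intro i j
    rw [← hsymm i j, abs_mul, abs_mul, abs_of_nonneg (hc i j), ← sq_abs (x i), ← sq_abs (x j)]
    nlinarith [hc i j, two_mul_le_add_sq |x i| |x j|]
  have hswap : ∑ i, ∑ j, c j i * x j ^ 2 = ∑ i, ∑ j, c i j * x i ^ 2 := Finset.sum_comm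
  calc |∑ i, ∑ j, c i j * x i * x j|
      ≤ ∑ i, ∑ j, |c i j * x i * x j| :=
        (abs_sum_le_sum_abs _ _).trans (sum_le_sum fun i _ => abs_sum_le_sum_abs _ _)
    _ ≤ ∑ i, ∑ j, (c i j * x i ^ 2 + c j i * x j ^ 2) / 2 := by
        gcongr with i _ j _; exact hpair i j
    _ = (∑ i, ∑ j, c i j * x i ^ 2 + ∑ i, ∑ j, c j i * x j ^ 2) / 2 := by
        simp only [add_div, sum_add_distrib, ← sum_div]
    _ = ∑ i, x i ^ 2 * ∑ j, c i j := by
        rw [hswap, add_self_div_two]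
        simp only [mul_comm (x _ ^ 2), sum_mul]

end QuadraticForm

section OffDiagWeight

variable {ι : Type*} [DecidableEq ι] (w : ι → ℝ)

def offDiagWeight (i j : ι) : ℝ := if i = j then 0 else 1 - w i - w j

theorem offDiagWeight_comm (i j : ι) : offDiagWeight w i j = offDiagWeight w j i := by
  by_cases h : i = j
  · rw [h]
  · simp only [offDiagWeight, h, Ne.symm h, if_false]; ring

theorem offDiagWeight_eq (i j : ι) :
    offDiagWeight w i j = 1 - w i - w j - if i = j then 1 - 2 * w i else 0 := by
  by_cases h : i = j
  · subst h; simp only [offDiagWeight, if_true]; ring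
  · simp only [offDiagWeight, h, if_false, sub_zero]

variable [Fintype ι]

theorem offDiagWeight_nonneg {w : ι → ℝ} (hw0 : ∀ i, 0 ≤ w i) (hw1 : ∑ i, w i = 1) (i j : ι) :
    0 ≤ offDiagWeight w i j := by
  unfold offDiagWeight
  split_ifs with h
  · rfl
  · have := sum_le_sum_of_subset_of_nonneg (subset_univ {i, j}) fun k _ _ => hw0 k
    rw [sum_pair h, hw1] at this
    linarith

theorem sum_offDiagWeight {w : ι → ℝ} (hw1 : ∑ i, w i = 1) (i : ι) :
    ∑ j, offDiagWeight w i j = ((Fintype.card ι : ℝ) - 2) * (1 - w i) := by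
  simp only [offDiagWeight_eq, sum_sub_distrib, sum_ite_eq, mem_univ, if_true, sum_const,
    card_univ, nsmul_eq_mul, hw1]
  ring

theorem sum_offDiagWeight_mul_mul (x : ι → ℝ) :
    ∑ i, ∑ j, offDiagWeight w i j * x i * x j
      = 2 * ∑ i, x i ^ 2 * w i - 2 * (∑ i, x i) * (∑ i, x i * w i) + (∑ i, x i) ^ 2
        - ∑ i, x i ^ 2 := by
  have hterm : ∀ i j, offDiagWeight w i j * x i * x j
      = x i * x j - x i * w i * x j - x i * (x j * w j)
        - if i = j then x i ^ 2 - 2 * (x i ^ 2 * w i) else 0 := by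
    intro i j
    rw [offDiagWeight_eq]
    split_ifs with h
    · subst h; ring
    · ring
  simp only [hterm, sum_sub_distrib, sum_ite_eq, mem_univ, if_true, ← mul_sum, ← sum_mul]
  ring

end OffDiagWeight

section WeightedInequality

variable {ι : Type*} [Fintype ι]

theorem abs_sum_sq_mul_weight_sub_le (x : ι → ℝ) {w : ι → ℝ} (hw0 : ∀ i, 0 ≤ w i)
    (hw1 : ∑ i, w i = 1) :
    |∑ i, x i ^ 2 * w i - (∑ i, x i) * (∑ i, x i * w i) - 1 / 2 * (∑ i, x i ^ 2 - (∑ i, x i) ^ 2)|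
      ≤ ((Fintype.card ι : ℝ) / 2 - 1) * (∑ i, x i ^ 2 - ∑ i, x i ^ 2 * w i) := by
  classical
  have hbound := abs_sum_mul_mul_le_sum_sq_mul_sum (offDiagWeight_nonneg hw0 hw1)
    (offDiagWeight_comm w) x
  have hrows : ∑ i, x i ^ 2 * ∑ j, offDiagWeight w i j
      = ((Fintype.card ι : ℝ) - 2) * (∑ i, x i ^ 2 - ∑ i, x i ^ 2 * w i) := by
    rw [mul_sub, mul_sum, mul_sum, ← sum_sub_distrib]
    exact sum_congr rfl fun i _ => by rw [sum_offDiagWeight hw1]; ring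
  rw [hrows, sum_offDiagWeight_mul_mul] at hbound
  rw [abs_le] at hbound ⊢
  constructor <;> linarith [hbound.1, hbound.2]

end WeightedInequality

namespace Matrix

variable {ι : Type*} [Fintype ι]

theorem sum_sq_entries_eq_trace_mul_transpose (M : Matrix ι ι ℝ) :
    ∑ i, ∑ j, M i j ^ 2 = trace (M * Mᵀ) := by
  simp only [trace, diag_apply, mul_apply, transpose_apply, sq]

variable [DecidableEq ι] {U : Matrix ι ι ℝ}

theorem sum_mulVec_mul_mulVec_of_transpose_mul_self (hU : Uᵀ * U = 1) (x y : ι → ℝ) :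
    ∑ i, (U *ᵥ x) i * (U *ᵥ y) i = ∑ i, x i * y i := by
  change (U *ᵥ x) ⬝ᵥ (U *ᵥ y) = x ⬝ᵥ y
  rw [dotProduct_mulVec, ← mulVec_transpose, mulVec_mulVec, hU, one_mulVec]

theorem sum_sq_mulVec_of_transpose_mul_self (hU : Uᵀ * U = 1) (x : ι → ℝ) :
    ∑ i, (U *ᵥ x) i ^ 2 = ∑ i, x i ^ 2 := by
  simpa only [sq] using sum_mulVec_mul_mulVec_of_transpose_mul_self hU x x

theorem conj_mulVec_mulVec_of_transpose_mul_self (hU : Uᵀ * U = 1) (M : Matrix ι ι ℝ)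
    (y : ι → ℝ) : (U * M * Uᵀ) *ᵥ (U *ᵥ y) = U *ᵥ (M *ᵥ y) := by
  rw [mulVec_mulVec, Matrix.mul_assoc _ Uᵀ, hU, Matrix.mul_one, mulVec_mulVec]

theorem trace_conj_of_transpose_mul_self (hU : Uᵀ * U = 1) (M : Matrix ι ι ℝ) :
    trace (U * M * Uᵀ) = trace M := by
  rw [trace_mul_cycle, hU, Matrix.one_mul]

theorem sum_sq_entries_conj_of_transpose_mul_self (hU : Uᵀ * U = 1) (M : Matrix ι ι ℝ) :
    ∑ i, ∑ j, (U * M * Uᵀ) i j ^ 2 = ∑ i, ∑ j, M i j ^ 2 := by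
  have hconj : U * M * Uᵀ * (U * M * Uᵀ)ᵀ = U * (M * Mᵀ) * Uᵀ := by
    simp only [transpose_mul, transpose_transpose, Matrix.mul_assoc]
    rw [← Matrix.mul_assoc Uᵀ U, hU, Matrix.one_mul]
  rw [sum_sq_entries_eq_trace_mul_transpose, sum_sq_entries_eq_trace_mul_transpose, hconj,
    trace_conj_of_transpose_mul_self hU]

theorem sum_sq_entries_diagonal (d : ι → ℝ) :
    ∑ i, ∑ j, diagonal d i j ^ 2 = ∑ i, d i ^ 2 := by
  simp [diagonal_apply]

theorem IsSymm.exists_orthogonal_diagonalization {A : Matrix ι ι ℝ}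
    (hA : A.IsSymm) : ∃ (U : Matrix ι ι ℝ) (d : ι → ℝ), Uᵀ * U = 1 ∧ A = U * diagonal d * Uᵀ := by
  have hH : A.IsHermitian := isHermitian_iff_isSymm.mpr hA
  refine ⟨hH.eigenvectorUnitary, hH.eigenvalues, ?_, ?_⟩
  · simpa [star_eq_conjTranspose] using Unitary.coe_star_mul_self hH.eigenvectorUnitary
  · simpa [star_eq_conjTranspose] using hH.spectral_theorem

end Matrix

theorem stmt1_general (n : ℕ) (A : Matrix (Fin (2*n)) (Fin (2*n)) ℝ)
    (hA : A.IsSymm) (v : Fin (2*n) → ℝ) (hv : ∑ i, v i ^ 2 = 1) :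
    |(∑ i, (A.mulVec v i) ^ 2) - A.trace * (∑ i, v i * A.mulVec v i)
      - (1/2) * ((∑ i, ∑ j, A i j ^ 2) - A.trace ^ 2)|
      ≤ ((n : ℝ) - 1) * ((∑ i, ∑ j, A i j ^ 2) - ∑ i, (A.mulVec v i) ^ 2) := by
  obtain ⟨U, d, hU, rfl⟩ := hA.exists_orthogonal_diagonalization
  obtain ⟨y, rfl⟩ : ∃ y, v = U *ᵥ y :=
    ⟨Uᵀ *ᵥ v, by rw [mulVec_mulVec, mul_eq_one_comm.mp hU, one_mulVec]⟩
  rw [sum_sq_mulVec_of_transpose_mul_self hU] at hv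
  have key := abs_sum_sq_mul_weight_sub_le d (fun i => sq_nonneg (y i)) hv
  have hcard : (Fintype.card (Fin (2 * n)) : ℝ) / 2 - 1 = n - 1 := by
    rw [Fintype.card_fin]; push_cast; ring
  have hquad : ∀ i, y i * (d i * y i) = d i * y i ^ 2 := fun i => by ring
  rw [hcard] at key
  simpa only [conj_mulVec_mulVec_of_transpose_mul_self hU, sum_sq_mulVec_of_transpose_mul_self hU,
    sum_mulVec_mul_mulVec_of_transpose_mul_self hU, trace_conj_of_transpose_mul_self hU,
    sum_sq_entries_conj_of_transpose_mul_self hU, sum_sq_entries_diagonal, trace_diagonal,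
    mulVec_diagonal, mul_pow, hquad] using key

/-- Symmetric-matrix form of the fundamental inequality. -/
theorem stmt1 (n : ℕ) (hn : 1 ≤ n) (A : Matrix (Fin (2*n)) (Fin (2*n)) ℝ)
    (hA : A.IsSymm) (v : Fin (2*n) → ℝ) (hv : ∑ i, v i ^ 2 = 1) :
    |(∑ i, (A.mulVec v i) ^ 2) - A.trace * (∑ i, v i * A.mulVec v i)
      - (1/2) * ((∑ i, ∑ j, A i j ^ 2) - A.trace ^ 2)|
      ≤ ((n : ℝ) - 1) * ((∑ i, ∑ j, A i j ^ 2) - ∑ i, (A.mulVec v i) ^ 2) :=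
  stmt1_general n A hA v hv
end

section
/- Let n ≥ 1, 2 < p, ε ≥ 0, and let A be a symmetric (2n)×(2n) real matrix and v ∈ ℝ^{2n} a nonzero vector satisfying the relation (p−2)·vᵀAv + (ε + |v|²)·tr(A) = 0. Then [n/(p−2)² + 1/(p−2) − (n−1)]·tr(A)² ≤ ((2n−1)/2)·(‖A‖² − tr(A)²), where ‖A‖ is the Frobenius norm. -/
set_option maxHeartbeats 1000000 in
/-- Algebraic core of the pointwise estimate (Lemma 3.1 of the paper). -/
theorem stmt2 (n : ℕ) (hn : 1 ≤ n) (p ε : ℝ) (hp : 2 < p) (hε : 0 ≤ ε)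
    (A : Matrix (Fin (2*n)) (Fin (2*n)) ℝ) (hA : A.IsSymm)
    (v : Fin (2*n) → ℝ) (hv : v ≠ 0)
    (heq : (p - 2) * (∑ i, v i * A.mulVec v i) + (ε + ∑ i, v i ^ 2) * A.trace = 0) :
    ((n : ℝ)/(p-2)^2 + 1/(p-2) - ((n : ℝ) - 1)) * A.trace ^ 2
      ≤ ((2*(n : ℝ) - 1)/2) * ((∑ i, ∑ j, A i j ^ 2) - A.trace ^ 2) := by
  set w := A.mulVec v with hwdef
  set S := ∑ i, v i ^ 2 with hSdef
  set Q := ∑ i, v i * w i with hQdef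
  set W := ∑ i, w i ^ 2 with hWdef
  set F := ∑ i, ∑ j, A i j ^ 2 with hFdef
  set t := A.trace with htdef
  set d := p - 2 with hddef
  have hd0 : (0:ℝ) < d := by rw [hddef]; linarith
  have hn1 : (1:ℝ) ≤ (n:ℝ) := by exact_mod_cast hn
  have hsym : ∀ i j, A j i = A i j := fun i j => hA.apply i j
  have hw_i : ∀ i, w i = ∑ j, A i j * v j := by
    intro i; rw [hwdef]; simp [Matrix.mulVec, dotProduct]
  have ht : ∑ i, A i i = t := by rw [htdef]; simp [Matrix.trace, Matrix.diag]
  have hvv : ∑ j, v j * v j = S := by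
    rw [hSdef]; exact Finset.sum_congr rfl fun i _ => (pow_two (v i)).symm
  have hvw : ∑ j, v j * w j = Q := hQdef.symm
  have hwv : ∑ j, w j * v j = Q := by
    rw [← hvw]; exact Finset.sum_congr rfl fun j _ => mul_comm _ _
  have hww2 : ∑ j, w j * w j = W := by
    rw [hWdef]; exact Finset.sum_congr rfl fun i _ => (pow_two (w i)).symm
  have hrow : ∀ i, ∑ j, A i j * v j = w i := fun i => (hw_i i).symm
  have hcol : ∀ j, ∑ i, v i * A i j = w j := by
    intro j; rw [hw_i j]
    exact Finset.sum_congr rfl fun i _ => by rw [hsym i j]; ring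
  have hS : (0:ℝ) < S := by
    obtain ⟨i, hi⟩ := Function.ne_iff.mp hv
    rw [hSdef]
    exact Finset.sum_pos' (fun j _ => sq_nonneg _)
      ⟨i, Finset.mem_univ i, lt_of_le_of_ne (sq_nonneg _) (Ne.symm (pow_ne_zero 2 hi))⟩
  set u : Fin (2*n) → ℝ := fun i => ∑ j, A i j * w j with hudef
  have hu : ∀ i, ∑ j, A i j * w j = u i := fun i => by rw [hudef]
  have hvu : ∑ i, v i * u i = W := by
    have h1 : ∀ i, v i * u i = ∑ j, (v i * A i j) * w j := by
      intro i; rw [hudef]; rw [Finset.mul_sum]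
      exact Finset.sum_congr rfl fun j _ => by ring
    rw [Finset.sum_congr rfl fun i _ => h1 i, Finset.sum_comm]
    have h2 : ∀ j, ∑ i, (v i * A i j) * w j = w j * w j := by
      intro j; rw [← Finset.sum_mul, hcol j]
    rw [Finset.sum_congr rfl fun j _ => h2 j, hww2]
  set g : Fin (2*n) → Fin (2*n) → ℝ :=
    fun i j => S^2 * A i j - S*(v i * w j + w i * v j) + Q * (v i * v j) with hgdef
  have hg0 : ∀ i, ∑ j, v j * g i j = 0 := by
    intro i
    have expand : ∀ j, v j * g i j = S^2*(A i j * v j) - (S*v i)*(v j * w j)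
        - (S*w i)*(v j * v j) + (Q*v i)*(v j * v j) := fun j => by simp only [hgdef]; ring
    rw [Finset.sum_congr rfl fun j _ => expand j]
    simp only [Finset.sum_add_distrib, Finset.sum_sub_distrib, ← Finset.mul_sum]
    rw [hrow i, hvw, hvv]; ring
  have hgdiag : ∑ i, g i i = S^2*t - S*Q := by
    have expand : ∀ i, g i i = S^2*(A i i) - (2*S)*(v i * w i) + Q*(v i * v i) :=
      fun i => by simp only [hgdef]; ring
    rw [Finset.sum_congr rfl fun i _ => expand i]
    simp only [Finset.sum_add_distrib, Finset.sum_sub_distrib, ← Finset.mul_sum]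
    rw [ht, hvw, hvv]; ring
  have E1 : ∑ i, ∑ j, (S*(if i = j then 1 else 0) - v i * v j) * g i j = S^3*t - S^2*Q := by
    have inner : ∀ i, ∑ j, (S*(if i = j then 1 else 0) - v i * v j) * g i j = S * g i i := by
      intro i
      have expand : ∀ j, (S*(if i = j then 1 else 0) - v i * v j) * g i j
          = (if i = j then S * g i j else 0) - v i * (v j * g i j) :=
        fun j => by split <;> ring
      rw [Finset.sum_congr rfl fun j _ => expand j, Finset.sum_sub_distrib,
        Finset.sum_ite_eq, ← Finset.mul_sum, hg0 i, if_pos (Finset.mem_univ i)]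
      ring
    rw [Finset.sum_congr rfl fun i _ => inner i, ← Finset.mul_sum, hgdiag]; ring
  have E2 : ∑ i, ∑ j, (S*(if i = j then 1 else 0) - v i * v j)^2 = (2*(n:ℝ)-1)*S^2 := by
    have inner : ∀ i, ∑ j, (S*(if i = j then 1 else 0) - v i * v j)^2
        = S^2 - S*(v i * v i) := by
      intro i
      have expand : ∀ j, (S*(if i = j then 1 else 0) - v i * v j)^2
          = (v i * v i)*(v j * v j) + (if i = j then S^2 - 2*S*(v i * v j) else 0) :=
        fun j => by split <;> ring
      rw [Finset.sum_congr rfl fun j _ => expand j, Finset.sum_add_distrib,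
        ← Finset.mul_sum, hvv, Finset.sum_ite_eq, if_pos (Finset.mem_univ i)]
      ring
    rw [Finset.sum_congr rfl fun i _ => inner i, Finset.sum_sub_distrib, ← Finset.mul_sum,
      hvv, Finset.sum_const, Finset.card_univ, Fintype.card_fin, nsmul_eq_mul]
    push_cast; ring
  have E3 : ∑ i, ∑ j, (g i j)^2 = S^4*F - 2*S^3*W + S^2*Q^2 := by
    have inner : ∀ i, ∑ j, (g i j)^2 = S^4*(∑ j, A i j^2) - (2*S^3)*(v i * u i)
        - S^3*(w i * w i) + (2*S^2*Q)*(v i * w i) + (S^2*W - S*Q^2)*(v i * v i) := by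
      intro i
      have expand : ∀ j, (g i j)^2 = S^4*(A i j^2) - (2*S^3*v i)*(A i j * w j)
          - (2*S^3*w i - 2*S^2*Q*v i)*(A i j * v j)
          + (S^2*(v i * v i))*(w j ^ 2)
          + (2*S^2*(v i * w i) - 2*S*Q*(v i * v i))*(v j * w j)
          + (S^2*(w i * w i) - 2*S*Q*(v i * w i) + Q^2*(v i * v i))*(v j * v j) :=
        fun j => by simp only [hgdef]; ring
      rw [Finset.sum_congr rfl fun j _ => expand j]
      simp only [Finset.sum_add_distrib, Finset.sum_sub_distrib, ← Finset.mul_sum]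
      rw [hu i, hrow i, hvw, hvv, hWdef.symm]
      ring
    rw [Finset.sum_congr rfl fun i _ => inner i]
    simp only [Finset.sum_add_distrib, Finset.sum_sub_distrib, ← Finset.mul_sum]
    rw [hvu, hww2, hvw, hvv, ← hFdef]
    ring
  -- Cauchy–Schwarz over pairs
  have hCS := Finset.sum_mul_sq_le_sq_mul_sq Finset.univ
    (fun x : Fin (2*n) × Fin (2*n) => S*(if x.1 = x.2 then 1 else 0) - v x.1 * v x.2)
    (fun x : Fin (2*n) × Fin (2*n) => g x.1 x.2)
  simp only [Fintype.sum_prod_type] at hCS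
  rw [E1, E2, E3] at hCS
  have hstar : (S*t - Q)^2 ≤ (2*(n:ℝ)-1) * (S^2*F - 2*S*W + Q^2) := by
    have h4 : (0:ℝ) < S^4 := by positivity
    have e1 : (S^3*t - S^2*Q)^2 = (S*t - Q)^2 * S^4 := by ring
    have e2 : (2*(n:ℝ)-1)*S^2 * (S^4*F - 2*S^3*W + S^2*Q^2)
        = ((2*(n:ℝ)-1) * (S^2*F - 2*S*W + Q^2)) * S^4 := by ring
    rw [e1, e2] at hCS
    exact le_of_mul_le_mul_right hCS h4
  have hQW : Q^2 ≤ S * W := by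
    have := Finset.sum_mul_sq_le_sq_mul_sq Finset.univ v w
    rw [hvw.symm] at *
    exact this
  -- algebra
  clear_value w S Q W F t d u g
  clear hCS E1 E2 E3 hg0 hgdiag hvu hu hw_i ht hvv hvw hwv hww2 hrow hcol hsym
  have heq' : d * Q + (ε + S) * t = 0 := heq
  have e1 : d^2*Q^2 = (ε+S)^2*t^2 := by linear_combination (d*Q - (ε+S)*t) * heq'
  have e2 : d^2*(S*t-Q)^2 = ((d+1)*S+ε)^2*t^2 := by
    linear_combination (-(d*(S*t-Q) + ((d+1)*S+ε)*t)) * heq'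
  have hcoef : 2*((n:ℝ) + d - ((n:ℝ)-1)*d^2)*S^2
      ≤ ((d+1)*S+ε)^2 + (2*(n:ℝ)-1)*(ε+S)^2 - (2*(n:ℝ)-1)*d^2*S^2 := by
    nlinarith [mul_nonneg hε hS.le, mul_nonneg (mul_nonneg hε hS.le) hd0.le, sq_nonneg ε,
      mul_nonneg (sub_nonneg.2 hn1) (mul_nonneg hε hS.le),
      mul_nonneg (sub_nonneg.2 hn1) (sq_nonneg ε)]
  have hm2 : (0:ℝ) ≤ 2*(2*(n:ℝ)-1)*d^2 := by nlinarith [sq_nonneg d]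
  have hXY' : (2*((n:ℝ) + d - ((n:ℝ)-1)*d^2)*t^2)*S^2 ≤ ((2*(n:ℝ)-1)*d^2*(F - t^2))*S^2 := by
    have e1m : (2*(n:ℝ)-1) * (d^2*Q^2) = (2*(n:ℝ)-1) * ((ε+S)^2*t^2) := by rw [e1]
    linarith [mul_le_mul_of_nonneg_left hstar (sq_nonneg d),
      mul_le_mul_of_nonneg_left hQW hm2,
      mul_le_mul_of_nonneg_right hcoef (sq_nonneg t), e1m, e2]
  have hS2 : (0:ℝ) < S^2 := by positivity
  have hXY : 2*((n:ℝ) + d - ((n:ℝ)-1)*d^2)*t^2 ≤ (2*(n:ℝ)-1)*d^2*(F - t^2) :=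
    le_of_mul_le_mul_right hXY' hS2
  have hd2 : (0:ℝ) < 2*d^2 := by positivity
  have hgoal_eq : ((n:ℝ)/d^2 + 1/d - ((n:ℝ)-1))*t^2
      = (2*((n:ℝ) + d - ((n:ℝ)-1)*d^2)*t^2)/(2*d^2) := by
    field_simp
  have hrhs_eq : ((2*(n:ℝ)-1)/2)*(F - t^2) = ((2*(n:ℝ)-1)*d^2*(F-t^2))/(2*d^2) := by
    field_simp
  rw [hgoal_eq, hrhs_eq]
  exact (div_le_div_iff_of_pos_right hd2).mpr hXY
end
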